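/- Let A be an m-by-n random matrix whose entries a_{ij} are i.i.d. from a symmetric distribution with zero mean (and with P(A = 0) = 0 so that A/||A||_2 is well defined). Then for every i, j, the variance of a_{ij}/||A||_2 is at most 1/max(m, n), where ||A||_2 denotes the spectral norm (largest singular value) of A. -/

import Mathlib

/-!
The spectral norm dominates the Euclidean norm of every column and of every row, so
`∑ᵢⱼ a_{ij}² ≤ min(m, n) ‖A‖₂²`. It is invariant under permuting rows and columns, and the law
of an i.i.d. entry vector is invariant under permuting its coordinates; hence all `mn` variables
`(a_{ij} / ‖A‖₂)²` have the same mean, which is therefore at most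
`min(m, n) / (mn) = 1 / max(m, n)`. The variance is bounded by this second moment.
-/

open MeasureTheory ProbabilityTheory

/-- The spectral norm (largest singular value) of a real matrix. -/
noncomputable def spectralNorm' {m n : ℕ} (A : Matrix (Fin m) (Fin n) ℝ) : ℝ :=
  ‖LinearMap.toContinuousLinearMap (Matrix.toEuclideanLin A)‖

namespace ProbabilityTheory

variable {Ω ι β : Type*} [MeasurableSpace Ω] {μ : Measure Ω} [Fintype ι] [MeasurableSpace β]

theorem iIndepFun.identDistrib_comp_perm {X : ι → Ω → β} (hX : ∀ i, AEMeasurable (X i) μ)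
    (hindep : iIndepFun X μ) (hident : ∀ i j, IdentDistrib (X i) (X j) μ μ)
    (σ : Equiv.Perm ι) :
    IdentDistrib (fun ω i => X (σ i) ω) (fun ω i => X i ω) μ μ where
  aemeasurable_fst := aemeasurable_pi_lambda _ fun i => hX (σ i)
  aemeasurable_snd := aemeasurable_pi_lambda _ hX
  map_eq := by
    rw [(hindep.precomp σ.injective).map_fun_eq_pi_map fun i => hX (σ i),
      hindep.map_fun_eq_pi_map hX]
    exact congrArg _ (funext fun i => (hident (σ i) i).map_eq)

end ProbabilityTheory

namespace Matrix

open scoped Matrix.Norms.L2Operator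

variable {𝕜 m n m' n' : Type*} [RCLike 𝕜] [Fintype m] [Fintype n] [DecidableEq n]
  [Fintype m'] [Fintype n'] [DecidableEq n']

lemma l2_opNorm_submatrix_equiv_le (A : Matrix m n 𝕜) (e : m' ≃ m) (f : n' ≃ n) :
    ‖A.submatrix e f‖ ≤ ‖A‖ := by
  refine ContinuousLinearMap.opNorm_le_bound _ (norm_nonneg _) fun x => ?_
  let y := LinearIsometryEquiv.piLpCongrLeft 2 𝕜 𝕜 f x
  have hx : toEuclideanLin (A.submatrix e f) x = LinearIsometryEquiv.piLpCongrLeft 2 𝕜 𝕜 e.symm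
      ((EuclideanSpace.equiv m 𝕜).symm (A *ᵥ y)) := by
    ext i
    simp [y, toLpLin_apply, submatrix_mulVec_equiv, Equiv.piCongrLeft', Function.comp_def]
  calc ‖toEuclideanLin (A.submatrix e f) x‖ = ‖(EuclideanSpace.equiv m 𝕜).symm (A *ᵥ y)‖ := by
        rw [hx, LinearIsometryEquiv.norm_map]
    _ ≤ ‖A‖ * ‖y‖ := A.l2_opNorm_mulVec y
    _ = ‖A‖ * ‖x‖ := by rw [LinearIsometryEquiv.norm_map]

lemma l2_opNorm_submatrix_equiv (A : Matrix m n 𝕜) (e : m' ≃ m) (f : n' ≃ n) :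
    ‖A.submatrix e f‖ = ‖A‖ := by
  refine le_antisymm (l2_opNorm_submatrix_equiv_le A e f) ?_
  simpa using l2_opNorm_submatrix_equiv_le (A.submatrix e f) e.symm f.symm

lemma sum_norm_sq_le_l2_opNorm_sq (A : Matrix m n 𝕜) (j : n) :
    ∑ i, ‖A i j‖ ^ 2 ≤ ‖A‖ ^ 2 := by
  have h := A.l2_opNorm_mulVec (EuclideanSpace.single j 1)
  rw [PiLp.norm_single, norm_one, mul_one] at h
  have hcol : (EuclideanSpace.equiv m 𝕜).symm (A *ᵥ (EuclideanSpace.single j 1).ofLp)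
      = WithLp.toLp 2 (fun i => A i j) := by
    ext i
    simp
  rwa [hcol, EuclideanSpace.norm_eq, Real.sqrt_le_left (norm_nonneg A)] at h

lemma sum_sum_norm_sq_le_card_mul_l2_opNorm_sq (A : Matrix m n 𝕜) :
    ∑ i, ∑ j, ‖A i j‖ ^ 2 ≤ Fintype.card n * ‖A‖ ^ 2 := by
  rw [Finset.sum_comm]
  simpa using Finset.sum_le_sum fun j (_ : j ∈ Finset.univ) => A.sum_norm_sq_le_l2_opNorm_sq j

lemma sum_sum_norm_sq_le_min_card_mul_l2_opNorm_sq [DecidableEq m] (A : Matrix m n 𝕜) :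
    ∑ i, ∑ j, ‖A i j‖ ^ 2 ≤ min (Fintype.card m : ℝ) (Fintype.card n) * ‖A‖ ^ 2 := by
  rw [min_mul_of_nonneg _ _ (sq_nonneg _)]
  refine le_min ?_ A.sum_sum_norm_sq_le_card_mul_l2_opNorm_sq
  simpa [Finset.sum_comm (γ := m), l2_opNorm_conjTranspose] using
    Aᴴ.sum_sum_norm_sq_le_card_mul_l2_opNorm_sq

end Matrix

section SpectralNorm

open scoped Matrix.Norms.L2Operator

variable {m n : ℕ}

lemma spectralNorm'_eq_l2_opNorm (A : Matrix (Fin m) (Fin n) ℝ) : spectralNorm' A = ‖A‖ := rfl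

lemma spectralNorm'_submatrix_equiv (A : Matrix (Fin m) (Fin n) ℝ) (e : Fin m ≃ Fin m)
    (f : Fin n ≃ Fin n) : spectralNorm' (A.submatrix e f) = spectralNorm' A :=
  A.l2_opNorm_submatrix_equiv e f

lemma sum_sq_div_spectralNorm'_le (A : Matrix (Fin m) (Fin n) ℝ) :
    ∑ p : Fin m × Fin n, (A p.1 p.2 / spectralNorm' A) ^ 2 ≤ min (m : ℝ) n := by
  simp_rw [spectralNorm'_eq_l2_opNorm, div_pow, ← Finset.sum_div, Fintype.sum_prod_type]
  refine div_le_of_le_mul₀ (sq_nonneg _) (by positivity) ?_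
  simpa [sq_abs] using A.sum_sum_norm_sq_le_min_card_mul_l2_opNorm_sq

lemma continuous_spectralNorm'_of :
    Continuous fun f : Fin m × Fin n → ℝ => spectralNorm' (Matrix.of fun k l => f (k, l)) := by
  simp_rw [spectralNorm'_eq_l2_opNorm]
  exact continuous_norm.comp (by fun_prop)

end SpectralNorm

section RandomMatrix

variable {m n : ℕ} {Ω : Type*} [MeasurableSpace Ω] {μ : Measure Ω}
  {A : Ω → Matrix (Fin m) (Fin n) ℝ}

lemma measurable_spectralNorm'
    (hmeas : ∀ p : Fin m × Fin n, Measurable (fun ω => A ω p.1 p.2)) :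
    Measurable fun ω => spectralNorm' (A ω) :=
  (continuous_spectralNorm'_of.measurable.comp (measurable_pi_lambda _ hmeas) :)

lemma integral_sq_entry_div_spectralNorm'_eq
    (hmeas : ∀ p : Fin m × Fin n, Measurable (fun ω => A ω p.1 p.2))
    (hindep : iIndepFun (fun (p : Fin m × Fin n) ω => A ω p.1 p.2) μ)
    (hident : ∀ p q : Fin m × Fin n,
      IdentDistrib (fun ω => A ω p.1 p.2) (fun ω => A ω q.1 q.2) μ μ)
    (p q : Fin m × Fin n) :
    ∫ ω, (A ω p.1 p.2 / spectralNorm' (A ω)) ^ 2 ∂μ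
      = ∫ ω, (A ω q.1 q.2 / spectralNorm' (A ω)) ^ 2 ∂μ := by
  let π := Equiv.swap p.1 q.1
  let ρ := Equiv.swap p.2 q.2
  let F : (Fin m × Fin n → ℝ) → ℝ :=
    fun f => (f q / spectralNorm' (Matrix.of fun k l => f (k, l))) ^ 2
  have hF : Measurable F :=
    ((measurable_pi_apply q).div continuous_spectralNorm'_of.measurable).pow_const 2
  have hswap := (hindep.identDistrib_comp_perm (fun r => (hmeas r).aemeasurable) hident
    (π.prodCongr ρ)).comp hF
  calc ∫ ω, (A ω p.1 p.2 / spectralNorm' (A ω)) ^ 2 ∂μ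
      = ∫ ω, F (fun r => A ω (π.prodCongr ρ r).1 (π.prodCongr ρ r).2) ∂μ := by
        refine integral_congr_ae (.of_forall fun ω => ?_)
        change _ = (A ω (π q.1) (ρ q.2) / spectralNorm' ((A ω).submatrix π ρ)) ^ 2
        simp [π, ρ, spectralNorm'_submatrix_equiv]
    _ = ∫ ω, F (fun r => A ω r.1 r.2) ∂μ := hswap.integral_eq

end RandomMatrix

theorem stmt3_general (m n : ℕ)
    {Ω : Type*} [MeasurableSpace Ω] (μ : Measure Ω) [IsProbabilityMeasure μ]
    (A : Ω → Matrix (Fin m) (Fin n) ℝ)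
    (hmeas : ∀ p : Fin m × Fin n, Measurable (fun ω => A ω p.1 p.2))
    (hindep : iIndepFun
      (fun (p : Fin m × Fin n) ω => A ω p.1 p.2) μ)
    (hident : ∀ p q : Fin m × Fin n,
      IdentDistrib (fun ω => A ω p.1 p.2) (fun ω => A ω q.1 q.2) μ μ)
    (i : Fin m) (j : Fin n) :
    variance (fun ω => A ω i j / spectralNorm' (A ω)) μ ≤ 1 / (max m n : ℝ) := by
  set Y : Fin m × Fin n → Ω → ℝ := fun p ω => (A ω p.1 p.2 / spectralNorm' (A ω)) ^ 2
  have hY_meas (p) : Measurable (Y p) :=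
    ((hmeas p).div (measurable_spectralNorm' hmeas)).pow_const 2
  have hY_sum (ω) : ∑ p, Y p ω ≤ min (m : ℝ) n := sum_sq_div_spectralNorm'_le (A ω)
  have hY_int (p) : Integrable (Y p) μ := by
    refine .of_bound (hY_meas p).aestronglyMeasurable (min (m : ℝ) n) (.of_forall fun ω => ?_)
    rw [Real.norm_of_nonneg (sq_nonneg _)]
    exact (Finset.single_le_sum (f := fun r => Y r ω) (fun r _ => sq_nonneg _)
      (Finset.mem_univ p)).trans (hY_sum ω)
  have hmass : (m * n : ℝ) * ∫ ω, Y (i, j) ω ∂μ ≤ min (m : ℝ) n := calc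
    (m * n : ℝ) * ∫ ω, Y (i, j) ω ∂μ = ∑ p, ∫ ω, Y p ω ∂μ := by
      simp [Y, integral_sq_entry_div_spectralNorm'_eq hmeas hindep hident _ (i, j)]
    _ = ∫ ω, ∑ p, Y p ω ∂μ := (integral_finsetSum _ fun p _ => hY_int p).symm
    _ ≤ min (m : ℝ) n := by
      simpa using integral_mono (integrable_finsetSum _ fun p _ => hY_int p)
        (integrable_const _) hY_sum
  have hm : (0 : ℝ) < m := by exact_mod_cast i.pos
  have hn : (0 : ℝ) < n := by exact_mod_cast j.pos
  calc variance (fun ω => A ω i j / spectralNorm' (A ω)) μ ≤ ∫ ω, Y (i, j) ω ∂μ :=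
        variance_le_expectation_sq
          ((hmeas (i, j)).div (measurable_spectralNorm' hmeas)).aestronglyMeasurable
    _ ≤ min (m : ℝ) n / (m * n) := by rw [le_div_iff₀ (by positivity), mul_comm]; exact hmass
    _ = 1 / (max m n : ℝ) := by
      rw [← min_mul_max (m : ℝ) n]
      field_simp [(lt_min hm hn).ne', (lt_max_of_lt_left hm).ne']

/-- If the entries of a random `m × n` matrix `A` are i.i.d. from a symmetric zero-mean
distribution (with `P(A = 0) = 0` so that `A / ‖A‖₂` is well defined), then for every entry,
`Var(a_{ij} / ‖A‖₂) ≤ 1 / max m n`. -/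
theorem stmt3 (m n : ℕ) (hm : 0 < m) (hn : 0 < n)
    {Ω : Type*} [MeasurableSpace Ω] (μ : Measure Ω) [IsProbabilityMeasure μ]
    (A : Ω → Matrix (Fin m) (Fin n) ℝ)
    (hmeas : ∀ p : Fin m × Fin n, Measurable (fun ω => A ω p.1 p.2))
    (hindep : iIndepFun
      (fun (p : Fin m × Fin n) ω => A ω p.1 p.2) μ)
    (hident : ∀ p q : Fin m × Fin n,
      IdentDistrib (fun ω => A ω p.1 p.2) (fun ω => A ω q.1 q.2) μ μ)
    (hsymm : ∀ p : Fin m × Fin n,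
      Measure.map (fun ω => A ω p.1 p.2) μ = Measure.map (fun ω => -A ω p.1 p.2) μ)
    (hmean : ∀ p : Fin m × Fin n, ∫ ω, A ω p.1 p.2 ∂μ = 0)
    (hzero : μ {ω | A ω = 0} = 0)
    (i : Fin m) (j : Fin n) :
    variance (fun ω => A ω i j / spectralNorm' (A ω)) μ ≤ 1 / (max m n : ℝ) :=
  stmt3_general m n μ A hmeas hindep hident i j
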